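/- arXiv:1805.07671 — 3 statements merged into one kernel-verified Lean document; each statement's English description precedes it below -/
import Mathlib

section
/- Let ω > 0 and c > 0. Let Y = [0,1]³ carry three-dimensional Lebesgue measure and S = [0,1]² carry two-dimensional Lebesgue measure. Let ε : Y → ℂ be measurable with Im ε(y) ≥ c for almost every y ∈ Y, and let σ : S → ℂ be measurable with Re σ(s) ≥ c for almost every s ∈ S. Let g : Y → ℂ³ and w : S → ℂ³ be measurable with ‖g‖², ‖w‖², ε·‖g‖², and σ·‖w‖² integrable. Set ξ = ∫_Y g(y) dy ∈ ℂ³. Then Im( ∫_Y ε(y) ‖g(y)‖² dy + (i/ω) ∫_S σ(s) ‖w(s)‖² ds ) ≥ c ‖ξ‖². -/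
/-!
`Im ε ≥ c` bounds the bulk term below by `c ∫_Y ‖g‖²`, and the sheet term contributes
`Im ((i/ω) z) = Re z / ω ≥ 0` with `z = ∫_S σ ‖w‖²`, since `Re σ ≥ c > 0`. Finally `Y` is a
probability space, so `‖∫_Y g‖² ≤ (∫_Y ‖g‖)² ≤ ∫_Y ‖g‖²` by the nonnegativity of the variance
of `‖g‖`.
-/

open MeasureTheory

/-- Lebesgue measure restricted to the unit cell `Y = [0,1]³`. -/
noncomputable def cellMeasureY : Measure (Fin 3 → ℝ) :=
  volume.restrict (Set.Icc (0 : Fin 3 → ℝ) 1)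

/-- Lebesgue measure restricted to the unit square `S = [0,1]²`. -/
noncomputable def cellMeasureS : Measure (Fin 2 → ℝ) :=
  volume.restrict (Set.Icc (0 : Fin 2 → ℝ) 1)

open ProbabilityTheory

instance isProbabilityMeasure_cellMeasureY : IsProbabilityMeasure cellMeasureY := by
  constructor
  simp [cellMeasureY, Real.volume_Icc_pi]

section Integrals

variable {α : Type*} [MeasurableSpace α] {μ : Measure α}

theorem sq_integral_le_integral_sq [IsProbabilityMeasure μ] {f : α → ℝ} (hf : MemLp f 2 μ) :
    (∫ x, f x ∂μ) ^ 2 ≤ ∫ x, f x ^ 2 ∂μ := by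
  have h := variance_eq_sub hf
  simp only [Pi.pow_apply] at h
  linarith [variance_nonneg f μ]

theorem sq_norm_integral_le_integral_sq_norm [IsProbabilityMeasure μ]
    {E : Type*} [NormedAddCommGroup E] [NormedSpace ℝ E] {g : α → E}
    (hg : Integrable (fun x => ‖g x‖ ^ 2) μ) :
    ‖∫ x, g x ∂μ‖ ^ 2 ≤ ∫ x, ‖g x‖ ^ 2 ∂μ := by
  have hmeas : AEStronglyMeasurable (fun x => ‖g x‖) μ := by
    simpa [Real.sqrt_sq (norm_nonneg _)] using
      Real.continuous_sqrt.comp_aestronglyMeasurable hg.aestronglyMeasurable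
  have hL2 : MemLp (fun x => ‖g x‖) 2 μ := (memLp_two_iff_integrable_sq hmeas).2 hg
  calc ‖∫ x, g x ∂μ‖ ^ 2 ≤ (∫ x, ‖g x‖ ∂μ) ^ 2 :=
        pow_le_pow_left₀ (norm_nonneg _) (norm_integral_le_integral_norm g) 2
    _ ≤ ∫ x, ‖g x‖ ^ 2 ∂μ := sq_integral_le_integral_sq hL2

theorem mul_integral_le_im_integral_mul {ε : α → ℂ} {f : α → ℝ} {c : ℝ}
    (hf : Integrable f μ) (hf0 : 0 ≤ f) (hεf : Integrable (fun x => ε x * f x) μ)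
    (hε : ∀ᵐ x ∂μ, c ≤ (ε x).im) :
    c * ∫ x, f x ∂μ ≤ (∫ x, ε x * f x ∂μ).im := by
  have him : (∫ x, ε x * f x ∂μ).im = ∫ x, (ε x).im * f x ∂μ := by
    simpa using (integral_im hεf).symm
  rw [him, ← integral_const_mul]
  refine integral_mono_ae (hf.const_mul c) (by simpa using hεf.im) ?_
  filter_upwards [hε] with x hx
  exact mul_le_mul_of_nonneg_right hx (hf0 x)

theorem re_integral_mul_nonneg {σ : α → ℂ} {f : α → ℝ} (hf0 : 0 ≤ f)
    (hσ : ∀ᵐ x ∂μ, 0 ≤ (σ x).re) :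
    0 ≤ (∫ x, σ x * f x ∂μ).re := by
  by_cases hσf : Integrable (fun x => σ x * f x) μ
  · have hre : (∫ x, σ x * f x ∂μ).re = ∫ x, (σ x).re * f x ∂μ := by
      simpa using (integral_re hσf).symm
    rw [hre]
    refine integral_nonneg_of_ae ?_
    filter_upwards [hσ] with x hx
    exact mul_nonneg hx (hf0 x)
  · simp [integral_undef hσf]

end Integrals

theorem Complex.im_I_div_ofReal_mul (r : ℝ) (z : ℂ) : (I / r * z).im = z.re / r := by
  rw [div_mul_eq_mul_div, div_ofReal_im, I_mul_im]

theorem effective_permittivity_coercive_general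
    (ω c : ℝ) (hω : 0 < ω) (hc : 0 < c)
    (ε : (Fin 3 → ℝ) → ℂ) (σ : (Fin 2 → ℝ) → ℂ)
    (hεim : ∀ᵐ y ∂cellMeasureY, c ≤ (ε y).im)
    (hσre : ∀ᵐ s ∂cellMeasureS, c ≤ (σ s).re)
    (g : (Fin 3 → ℝ) → EuclideanSpace ℂ (Fin 3))
    (w : (Fin 2 → ℝ) → EuclideanSpace ℂ (Fin 3))
    (hg2 : Integrable (fun y => ‖g y‖ ^ 2) cellMeasureY)
    (hεg2 : Integrable (fun y => ε y * (‖g y‖ ^ 2 : ℂ)) cellMeasureY)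
    (ξ : EuclideanSpace ℂ (Fin 3)) (hξ : ξ = ∫ y, g y ∂cellMeasureY) :
    c * ‖ξ‖ ^ 2 ≤
      ((∫ y, ε y * (‖g y‖ ^ 2 : ℂ) ∂cellMeasureY) +
        (Complex.I / (ω : ℂ)) * ∫ s, σ s * (‖w s‖ ^ 2 : ℂ) ∂cellMeasureS).im := by
  simp only [← Complex.ofReal_pow] at hεg2 ⊢
  have hJensen : c * ‖ξ‖ ^ 2 ≤ c * ∫ y, ‖g y‖ ^ 2 ∂cellMeasureY :=
    mul_le_mul_of_nonneg_left (hξ ▸ sq_norm_integral_le_integral_sq_norm hg2) hc.le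
  have hbulk := mul_integral_le_im_integral_mul hg2 (fun y => sq_nonneg ‖g y‖) hεg2 hεim
  have hsheet : 0 ≤ (∫ s, σ s * ((‖w s‖ ^ 2 : ℝ) : ℂ) ∂cellMeasureS).re :=
    re_integral_mul_nonneg (fun s => sq_nonneg ‖w s‖)
      (hσre.mono fun s hs => hc.le.trans hs)
  rw [Complex.add_im, Complex.im_I_div_ofReal_mul]
  linarith [div_nonneg hsheet hω.le]

/-- Coercivity estimate (2.10)/(4.5) for the effective permittivity of the
homogenized Maxwell system: if `Im ε ≥ c` a.e. on `Y` and `Re σ ≥ c` a.e. on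
`S`, then for square-integrable fields `g` on `Y` and `w` on `S` with
`ξ = ∫_Y g`, one has
`Im (∫_Y ε ‖g‖² + (i/ω) ∫_S σ ‖w‖²) ≥ c ‖ξ‖²`. -/
theorem effective_permittivity_coercive
    (ω c : ℝ) (hω : 0 < ω) (hc : 0 < c)
    (ε : (Fin 3 → ℝ) → ℂ) (σ : (Fin 2 → ℝ) → ℂ)
    (hε : Measurable ε) (hσ : Measurable σ)
    (hεim : ∀ᵐ y ∂cellMeasureY, c ≤ (ε y).im)
    (hσre : ∀ᵐ s ∂cellMeasureS, c ≤ (σ s).re)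
    (g : (Fin 3 → ℝ) → EuclideanSpace ℂ (Fin 3))
    (w : (Fin 2 → ℝ) → EuclideanSpace ℂ (Fin 3))
    (hg : StronglyMeasurable g) (hw : StronglyMeasurable w)
    (hg2 : Integrable (fun y => ‖g y‖ ^ 2) cellMeasureY)
    (hw2 : Integrable (fun s => ‖w s‖ ^ 2) cellMeasureS)
    (hεg2 : Integrable (fun y => ε y * (‖g y‖ ^ 2 : ℂ)) cellMeasureY)
    (hσw2 : Integrable (fun s => σ s * (‖w s‖ ^ 2 : ℂ)) cellMeasureS)
    (ξ : EuclideanSpace ℂ (Fin 3)) (hξ : ξ = ∫ y, g y ∂cellMeasureY) :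
    c * ‖ξ‖ ^ 2 ≤
      ((∫ y, ε y * (‖g y‖ ^ 2 : ℂ) ∂cellMeasureY) +
        (Complex.I / (ω : ℂ)) * ∫ s, σ s * (‖w s‖ ^ 2 : ℂ) ∂cellMeasureS).im :=
  effective_permittivity_coercive_general ω c hω hc ε σ hεim hσre g w hg2 hεg2 ξ hξ
end

section
/- Let L > 0, d > 0, M ≥ 0, and let Σ ⊆ ℝ² be a measurable set of finite two-dimensional Lebesgue measure |Σ|. Let u : ℝ² × ℝ → ℂ³ be measurable with ∫_{Σ×(−L,L)} ‖u(x)‖² dx < ∞ and let F : ℝ² × ℝ → ℂ³ be measurable with ‖F(x)‖ ≤ M for all x. Let K = { k ∈ ℤ : −L < k·d and k·d < L − d }, and for t ∈ (0,1) define α(t) = ∑_{k ∈ K} d ∫_Σ ⟨u(x′,(k+t)d), F(x′,(k+t)d)⟩ dx′, where ⟨a,b⟩ = ∑_{j=1}^{3} a_j b_j. Then α(t) is defined (finite) for almost every t ∈ (0,1), and ∫_0^1 |α(t)|² dt ≤ 2L · |Σ| · M² · ∫_{Σ×(−L,L)} ‖u(x)‖² dx. -/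
/-!
For fixed `t`, Cauchy–Schwarz on each sheet bounds `|∫_Σ ⟨u, F⟩|²` by `|Σ| M² g(s)`, where
`g(s) = ∫_Σ ‖u(x', s)‖² dx'`, and Cauchy–Schwarz over the sheets, whose weights `d` add up to at
most `2L`, gives `|α(t)|² ≤ 2L |Σ| M² ∑_k d g((k + t) d)`. Integrating over `t ∈ (0, 1)` turns
`d g((k + t) d)` into `∫_{kd}^{(k+1)d} g`; these intervals are disjoint subsets of `(-L, L)`, so the
sum is at most `∫_{-L}^{L} g = ∫_{Σ×(-L,L)} ‖u‖²` (Fubini). Fubini also makes almost every slice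
`u(·, s)` square integrable on `Σ`, which is why `α(t)` is defined for almost every `t`.
-/

open MeasureTheory

/-- The bilinear (non-conjugated) dot product `⟨a,b⟩ = ∑ j, a j * b j` on `ℂ³`. -/
noncomputable def bilinDot (a b : EuclideanSpace ℂ (Fin 3)) : ℂ :=
  ∑ j, a j * b j

open Set

lemma norm_bilinDot_le (a b : EuclideanSpace ℂ (Fin 3)) : ‖bilinDot a b‖ ≤ ‖a‖ * ‖b‖ := by
  set c : EuclideanSpace ℂ (Fin 3) := WithLp.toLp 2 fun j => starRingEnd ℂ (a j)
  have hc : bilinDot a b = inner ℂ c b := by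
    simp [bilinDot, c, PiLp.inner_apply, mul_comm]
  have hca : ‖c‖ = ‖a‖ := by simp [c, EuclideanSpace.norm_eq]
  rw [hc, ← hca]
  exact norm_inner_le_norm c b

lemma continuous_bilinDot : Continuous (Function.uncurry bilinDot) := by
  unfold Function.uncurry bilinDot
  fun_prop

lemma norm_sum_smul_sq_le {ι E : Type*} [NormedAddCommGroup E] [NormedSpace ℝ E] (s : Finset ι)
    {w : ι → ℝ} (hw : ∀ i ∈ s, 0 ≤ w i) (z : ι → E) :
    ‖∑ i ∈ s, w i • z i‖ ^ 2 ≤ (∑ i ∈ s, w i) * ∑ i ∈ s, w i * ‖z i‖ ^ 2 := by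
  have hle : ‖∑ i ∈ s, w i • z i‖ ≤ ∑ i ∈ s, w i * ‖z i‖ :=
    (norm_sum_le _ _).trans_eq (Finset.sum_congr rfl fun i hi => by
      rw [norm_smul, Real.norm_of_nonneg (hw i hi)])
  calc ‖∑ i ∈ s, w i • z i‖ ^ 2 ≤ (∑ i ∈ s, w i * ‖z i‖) ^ 2 := by gcongr
    _ ≤ _ := Finset.sum_sq_le_sum_mul_sum_of_sq_le_mul s hw
        (fun i hi => mul_nonneg (hw i hi) (sq_nonneg _))
        fun i _ => by rw [mul_pow, sq (w i), mul_assoc]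

section BilinDotIntegral

variable {X : Type*} [MeasurableSpace X] {μ : Measure X} {v w : X → EuclideanSpace ℂ (Fin 3)}

lemma integrable_bilinDot (hv : MemLp v 2 μ) (hw : MemLp w 2 μ) :
    Integrable (fun x => bilinDot (v x) (w x)) μ :=
  (MemLp.integrable_mul hv.norm hw.norm).mono'
    (continuous_bilinDot.comp_aestronglyMeasurable₂ hv.1 hw.1)
    (ae_of_all _ fun _ => norm_bilinDot_le _ _)

lemma norm_integral_bilinDot_sq_le (hv : MemLp v 2 μ) (hw : MemLp w 2 μ) :
    ‖∫ x, bilinDot (v x) (w x) ∂μ‖ ^ 2 ≤ (∫ x, ‖v x‖ ^ 2 ∂μ) * ∫ x, ‖w x‖ ^ 2 ∂μ := by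
  have holder := integral_mul_norm_le_Lp_mul_Lq Real.HolderConjugate.two_two
    (by simpa using hv) (by simpa using hw)
  simp only [Real.rpow_two, ← Real.sqrt_eq_rpow] at holder
  have hle : ‖∫ x, bilinDot (v x) (w x) ∂μ‖ ≤ √(∫ x, ‖v x‖ ^ 2 ∂μ) * √(∫ x, ‖w x‖ ^ 2 ∂μ) :=
    (norm_integral_le_of_norm_le (MemLp.integrable_mul hv.norm hw.norm)
      (ae_of_all _ fun _ => norm_bilinDot_le _ _)).trans holder
  calc ‖∫ x, bilinDot (v x) (w x) ∂μ‖ ^ 2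
      ≤ (√(∫ x, ‖v x‖ ^ 2 ∂μ) * √(∫ x, ‖w x‖ ^ 2 ∂μ)) ^ 2 := by gcongr
    _ = (∫ x, ‖v x‖ ^ 2 ∂μ) * ∫ x, ‖w x‖ ^ 2 ∂μ := by
      rw [mul_pow, Real.sq_sqrt (by positivity), Real.sq_sqrt (by positivity)]

variable [IsFiniteMeasure μ] {M : ℝ}

lemma norm_integral_bilinDot_sq_le_of_norm_le (hv : MemLp v 2 μ) (hw : AEStronglyMeasurable w μ)
    (hwM : ∀ x, ‖w x‖ ≤ M) :
    ‖∫ x, bilinDot (v x) (w x) ∂μ‖ ^ 2 ≤ μ.real univ * M ^ 2 * ∫ x, ‖v x‖ ^ 2 ∂μ := by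
  have hw2 : ∫ x, ‖w x‖ ^ 2 ∂μ ≤ μ.real univ * M ^ 2 := by
    rw [← smul_eq_mul, ← integral_const]
    exact integral_mono_of_nonneg (ae_of_all _ fun _ => by positivity) (integrable_const _)
      (ae_of_all _ fun x => pow_le_pow_left₀ (norm_nonneg _) (hwM x) 2)
  calc ‖∫ x, bilinDot (v x) (w x) ∂μ‖ ^ 2
      ≤ (∫ x, ‖v x‖ ^ 2 ∂μ) * ∫ x, ‖w x‖ ^ 2 ∂μ :=
        norm_integral_bilinDot_sq_le hv (.of_bound hw M (ae_of_all _ hwM))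
    _ ≤ (∫ x, ‖v x‖ ^ 2 ∂μ) * (μ.real univ * M ^ 2) := by gcongr
    _ = _ := mul_comm _ _

lemma norm_sum_smul_integral_bilinDot_sq_le {ι : Type*} (K : Finset ι) {c : ι → ℝ}
    (hc : ∀ i ∈ K, 0 ≤ c i) {v w : ι → X → EuclideanSpace ℂ (Fin 3)}
    (hv : ∀ i ∈ K, MemLp (v i) 2 μ) (hw : ∀ i, AEStronglyMeasurable (w i) μ)
    (hwM : ∀ i x, ‖w i x‖ ≤ M) :
    ‖∑ i ∈ K, c i • ∫ x, bilinDot (v i x) (w i x) ∂μ‖ ^ 2 ≤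
      (∑ i ∈ K, c i) * μ.real univ * M ^ 2 * ∑ i ∈ K, c i * ∫ x, ‖v i x‖ ^ 2 ∂μ := by
  calc _ ≤ (∑ i ∈ K, c i) * ∑ i ∈ K, c i * ‖∫ x, bilinDot (v i x) (w i x) ∂μ‖ ^ 2 :=
        norm_sum_smul_sq_le K hc _
    _ ≤ (∑ i ∈ K, c i) * ∑ i ∈ K, c i * (μ.real univ * M ^ 2 * ∫ x, ‖v i x‖ ^ 2 ∂μ) := by
        gcongr with i hi
        · exact Finset.sum_nonneg hc
        · exact hc i hi
        · exact norm_integral_bilinDot_sq_le_of_norm_le (hv i hi) (hw i) (hwM i)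
    _ = _ := by
        simp only [Finset.mul_sum]
        exact Finset.sum_congr rfl fun i _ => by ring

end BilinDotIntegral

section UnitInterval

variable (a : ℝ) {d : ℝ}

lemma measurableEmbedding_add_mul (hd : 0 < d) : MeasurableEmbedding fun t : ℝ => (a + t) * d :=
  ((Homeomorph.addLeft a).trans (Homeomorph.mulRight₀ d hd.ne')).measurableEmbedding

lemma map_volume_restrict_Ioo_zero_one (hd : 0 < d) :
    (volume.restrict (Ioo (0 : ℝ) 1)).map (fun t => (a + t) * d) =
      ENNReal.ofReal d⁻¹ • volume.restrict (Ioo (a * d) ((a + 1) * d)) := by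
  have hmap : volume.map (fun t : ℝ => (a + t) * d) = ENNReal.ofReal d⁻¹ • volume := by
    have : (fun t : ℝ => (a + t) * d) = (· * d) ∘ (a + ·) := rfl
    rw [this, ← Measure.map_map (measurable_mul_const d) (measurable_const_add a),
      map_add_left_eq_self, Real.map_volume_mul_right hd.ne', abs_of_pos (inv_pos.2 hd)]
  have hpre : (fun t : ℝ => (a + t) * d) ⁻¹' Ioo (a * d) ((a + 1) * d) = Ioo 0 1 := by
    ext t
    simp only [mem_preimage, mem_Ioo]
    constructor <;> rintro ⟨h₁, h₂⟩ <;> constructor <;> nlinarith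
  rw [← Measure.restrict_smul, ← hmap, (measurableEmbedding_add_mul a hd).restrict_map, hpre]

variable {a}

lemma ae_restrict_Ioo_zero_one_comp (hd : 0 < d) {p : ℝ → Prop}
    (hp : ∀ᵐ s ∂volume.restrict (Ioo (a * d) ((a + 1) * d)), p s) :
    ∀ᵐ t ∂volume.restrict (Ioo (0 : ℝ) 1), p ((a + t) * d) := by
  rw [← (measurableEmbedding_add_mul a hd).ae_map_iff, map_volume_restrict_Ioo_zero_one a hd]
  exact Measure.ae_smul_measure hp _

variable {E : Type*} [NormedAddCommGroup E]

lemma integrableOn_comp_Ioo_zero_one (hd : 0 < d) {g : ℝ → E}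
    (hg : IntegrableOn g (Ioo (a * d) ((a + 1) * d))) :
    IntegrableOn (fun t => g ((a + t) * d)) (Ioo 0 1) := by
  refine (measurableEmbedding_add_mul a hd).integrable_map_iff.1 ?_
  rw [map_volume_restrict_Ioo_zero_one a hd]
  exact hg.smul_measure ENNReal.ofReal_ne_top

lemma setIntegral_Ioo_zero_one_comp [NormedSpace ℝ E] (hd : 0 < d) (g : ℝ → E) :
    ∫ t in Ioo 0 1, g ((a + t) * d) = d⁻¹ • ∫ s in Ioo (a * d) ((a + 1) * d), g s := by
  rw [← (measurableEmbedding_add_mul a hd).integral_map, map_volume_restrict_Ioo_zero_one a hd,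
    integral_smul_measure, ENNReal.toReal_ofReal (inv_nonneg.2 hd.le)]

end UnitInterval

lemma sum_setIntegral_Ioo_le {d : ℝ} {g : ℝ → ℝ} {I : Set ℝ} (K : Finset ℤ)
    (hKI : ∀ k ∈ K, Ioo ((k : ℝ) * d) ((k + 1) * d) ⊆ I) (hg : IntegrableOn g I)
    (hg0 : 0 ≤ᵐ[volume.restrict I] g) :
    ∑ k ∈ K, ∫ s in Ioo ((k : ℝ) * d) ((k + 1) * d), g s ≤ ∫ s in I, g s := by
  have hdisj : (K : Set ℤ).PairwiseDisjoint fun k : ℤ => Ioo ((k : ℝ) * d) ((k + 1) * d) := by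
    intro j _ k _ hjk
    simpa [zsmul_eq_mul] using pairwise_disjoint_Ioo_add_zsmul (0 : ℝ) d hjk
  rw [← integral_biUnion_finset K (fun _ _ => measurableSet_Ioo) hdisj
    fun k hk => hg.mono_set (hKI k hk)]
  exact setIntegral_mono_set hg hg0 (iUnion₂_subset hKI).eventuallyLE

lemma sum_const_le_sub_of_Ioo_subset {d a b : ℝ} (hab : a ≤ b) (hd : 0 < d) (K : Finset ℤ)
    (hKI : ∀ k ∈ K, Ioo ((k : ℝ) * d) ((k + 1) * d) ⊆ Ioo a b) :
    ∑ _k ∈ K, d ≤ b - a := by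
  have := sum_setIntegral_Ioo_le K hKI (integrableOn_const measure_Ioo_lt_top.ne)
    (ae_of_all _ fun _ => zero_le_one)
  simpa [Real.volume_real_Ioo_of_le, hab, hd.le, add_mul] using this

lemma integrableOn_sum_comp_Ioo_zero_one {d : ℝ} (hd : 0 < d) {g : ℝ → ℝ} {I : Set ℝ}
    (K : Finset ℤ) (hKI : ∀ k ∈ K, Ioo ((k : ℝ) * d) ((k + 1) * d) ⊆ I) (hg : IntegrableOn g I) :
    IntegrableOn (fun t => ∑ k ∈ K, d * g ((k + t) * d)) (Ioo 0 1) :=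
  integrable_finsetSum K fun k hk =>
    (integrableOn_comp_Ioo_zero_one hd (hg.mono_set (hKI k hk))).const_mul d

lemma setIntegral_sum_comp_Ioo_zero_one_le {d : ℝ} (hd : 0 < d) {g : ℝ → ℝ} {I : Set ℝ}
    (K : Finset ℤ) (hKI : ∀ k ∈ K, Ioo ((k : ℝ) * d) ((k + 1) * d) ⊆ I) (hg : IntegrableOn g I)
    (hg0 : 0 ≤ᵐ[volume.restrict I] g) :
    ∫ t in Ioo 0 1, ∑ k ∈ K, d * g ((k + t) * d) ≤ ∫ s in I, g s := by
  rw [integral_finsetSum K fun k hk =>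
    (integrableOn_comp_Ioo_zero_one hd (hg.mono_set (hKI k hk))).const_mul d]
  refine le_of_eq_of_le (Finset.sum_congr rfl fun k _ => ?_) (sum_setIntegral_Ioo_le K hKI hg hg0)
  rw [integral_const_mul, setIntegral_Ioo_zero_one_comp hd, smul_eq_mul,
    mul_inv_cancel_left₀ hd.ne']

lemma finite_setOf_int_mul_mem {L d : ℝ} (hd : 0 < d) :
    {k : ℤ | -L < (k : ℝ) * d ∧ (k : ℝ) * d < L - d}.Finite :=
  (finite_Icc ⌈-L / d⌉ ⌊(L - d) / d⌋).subset fun _ ⟨h₁, h₂⟩ =>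
    ⟨Int.ceil_le.2 ((div_le_iff₀ hd).2 h₁.le), Int.le_floor.2 ((le_div_iff₀ hd).2 h₂.le)⟩

section Slices

variable {X : Type*} [MeasurableSpace X] {μ : Measure X} {d : ℝ}

lemma ae_forall_memLp_slice {E : Type*} [NormedAddCommGroup E] [SFinite μ] (hd : 0 < d)
    {u : X × ℝ → E} (hu : StronglyMeasurable u) {I : Set ℝ}
    (hu2 : Integrable (fun p => ‖u p‖ ^ 2) (μ.prod (volume.restrict I)))
    (K : Finset ℤ) (hKI : ∀ k ∈ K, Ioo ((k : ℝ) * d) ((k + 1) * d) ⊆ I) :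
    ∀ᵐ t ∂volume.restrict (Ioo (0 : ℝ) 1), ∀ k ∈ K, MemLp (fun x => u (x, (k + t) * d)) 2 μ := by
  refine (Filter.eventually_all_finset K).2 fun k hk =>
    ae_restrict_Ioo_zero_one_comp hd (p := fun s => MemLp (fun x => u (x, s)) 2 μ) ?_
  refine ae_restrict_of_ae_restrict_of_subset (hKI k hk) (hu2.prod_left_ae.mono fun s hs => ?_)
  exact (memLp_two_iff_integrable_sq_norm
    (hu.comp_measurable measurable_prodMk_right).aestronglyMeasurable).2 hs

lemma integral_norm_sq_sum_slice_le [IsFiniteMeasure μ] {a b M : ℝ} (hab : a ≤ b) (hd : 0 < d)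
    {u F : X × ℝ → EuclideanSpace ℂ (Fin 3)} (hu : StronglyMeasurable u)
    (hF : StronglyMeasurable F) (hFM : ∀ x, ‖F x‖ ≤ M)
    (hu2 : Integrable (fun p => ‖u p‖ ^ 2) (μ.prod (volume.restrict (Ioo a b))))
    (K : Finset ℤ) (hKI : ∀ k ∈ K, Ioo ((k : ℝ) * d) ((k + 1) * d) ⊆ Ioo a b) :
    ∫ t in Ioo 0 1,
        ‖∑ k ∈ K, d • ∫ x, bilinDot (u (x, (k + t) * d)) (F (x, (k + t) * d)) ∂μ‖ ^ 2 ≤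
      (b - a) * μ.real univ * M ^ 2 * ∫ p, ‖u p‖ ^ 2 ∂μ.prod (volume.restrict (Ioo a b)) := by
  set g : ℝ → ℝ := fun s => ∫ x, ‖u (x, s)‖ ^ 2 ∂μ
  have hg : IntegrableOn g (Ioo a b) := hu2.integral_prod_right
  have hbound : ∀ᵐ t ∂volume.restrict (Ioo 0 1),
      ‖∑ k ∈ K, d • ∫ x, bilinDot (u (x, (k + t) * d)) (F (x, (k + t) * d)) ∂μ‖ ^ 2 ≤
        (b - a) * μ.real univ * M ^ 2 * ∑ k ∈ K, d * g ((k + t) * d) := by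
    filter_upwards [ae_forall_memLp_slice hd hu hu2 K hKI] with t ht
    refine (norm_sum_smul_integral_bilinDot_sq_le K (fun _ _ => hd.le) ht
      (fun _ => (hF.comp_measurable measurable_prodMk_right).aestronglyMeasurable)
      (fun _ _ => hFM _)).trans ?_
    gcongr
    exact sum_const_le_sub_of_Ioo_subset hab hd K hKI
  calc _ ≤ ∫ t in Ioo 0 1, (b - a) * μ.real univ * M ^ 2 * ∑ k ∈ K, d * g ((k + t) * d) :=
        integral_mono_of_nonneg (ae_of_all _ fun _ => sq_nonneg _)
          ((integrableOn_sum_comp_Ioo_zero_one hd K hKI hg).const_mul _) hbound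
    _ ≤ (b - a) * μ.real univ * M ^ 2 * ∫ s in Ioo a b, g s := by
        rw [integral_const_mul]
        gcongr
        exact setIntegral_sum_comp_Ioo_zero_one_le hd K hKI hg
          (ae_of_all _ fun _ => integral_nonneg fun _ => sq_nonneg _)
    _ = _ := by rw [integral_prod_symm _ hu2]

end Slices

theorem slice_functional_L2_bound_general
    (L d M : ℝ) (hL : 0 < L) (hd : 0 < d)
    (S : Set (Fin 2 → ℝ)) (hSfin : volume S < ⊤)
    (u F : (Fin 2 → ℝ) × ℝ → EuclideanSpace ℂ (Fin 3))
    (hu : StronglyMeasurable u)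
    (huL2 : IntegrableOn (fun x => ‖u x‖ ^ 2) (S ×ˢ Set.Ioo (-L) L))
    (hF : StronglyMeasurable F)
    (hFbd : ∀ x, ‖F x‖ ≤ M)
    (K : Set ℤ) (hK : K = {k : ℤ | -L < (k : ℝ) * d ∧ (k : ℝ) * d < L - d})
    (α : ℝ → ℂ)
    (hα : ∀ t, α t = ∑' k : K,
      d * ∫ x' in S,
        bilinDot (u (x', (((k : ℤ) : ℝ) + t) * d)) (F (x', (((k : ℤ) : ℝ) + t) * d))) :
    (∀ᵐ t ∂(volume.restrict (Set.Ioo (0 : ℝ) 1)), ∀ k ∈ K,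
      IntegrableOn
        (fun x' => bilinDot (u (x', ((k : ℝ) + t) * d)) (F (x', ((k : ℝ) + t) * d))) S) ∧
    (∫ t in Set.Ioo (0 : ℝ) 1, ‖α t‖ ^ 2) ≤
      2 * L * (volume S).toReal * M ^ 2 *
        ∫ x in S ×ˢ Set.Ioo (-L) L, ‖u x‖ ^ 2 := by
  have hKfin : K.Finite := hK ▸ finite_setOf_int_mul_mem hd
  have hKI : ∀ k ∈ hKfin.toFinset, Ioo ((k : ℝ) * d) ((k + 1) * d) ⊆ Ioo (-L) L := fun k hk => by
    obtain ⟨h₁, h₂⟩ : -L < (k : ℝ) * d ∧ (k : ℝ) * d < L - d := by simpa [hK] using hk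
    exact Ioo_subset_Ioo h₁.le (by linarith)
  have hα' : ∀ t, α t = ∑ k ∈ hKfin.toFinset,
      d • ∫ x' in S, bilinDot (u (x', (k + t) * d)) (F (x', (k + t) * d)) := fun t => by
    rw [hα, ← Finset.tsum_subtype', hKfin.coe_toFinset]
    simp only [Complex.real_smul]
  have : IsFiniteMeasure (volume.restrict S) := isFiniteMeasure_restrict.2 hSfin.ne
  have hprod : Integrable (fun p => ‖u p‖ ^ 2)
      ((volume.restrict S).prod (volume.restrict (Ioo (-L) L))) := by
    rwa [Measure.prod_restrict, ← Measure.volume_eq_prod]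
  refine ⟨(ae_forall_memLp_slice hd hu hprod _ hKI).mono fun t ht k hk =>
    integrable_bilinDot (ht k (hKfin.mem_toFinset.2 hk))
      (.of_bound (hF.comp_measurable measurable_prodMk_right).aestronglyMeasurable M
        (ae_of_all _ fun _ => hFbd _)), ?_⟩
  simp only [hα']
  convert integral_norm_sq_sum_slice_le (neg_le_self hL.le) hd hu hF hFbd hprod _ hKI using 1
  rw [measureReal_def, Measure.restrict_apply_univ, Measure.prod_restrict,
    ← Measure.volume_eq_prod]
  ring

/-- The `L²(0,1)` bound (4.9) on the slice functional `α` of Lemma 4.2 of the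
paper: for a family of parallel sheets at heights `k·d`, `k ∈ K`, the averages
`α(t) = ∑_{k∈K} d ∫_Σ ⟨u(x′,(k+t)d), F(x′,(k+t)d)⟩ dx′` are defined for a.e.
`t ∈ (0,1)` and satisfy
`∫₀¹ |α(t)|² dt ≤ 2L·|Σ|·M²·∫_{Σ×(−L,L)} ‖u‖²`. -/
theorem slice_functional_L2_bound
    (L d M : ℝ) (hL : 0 < L) (hd : 0 < d) (hM : 0 ≤ M)
    (S : Set (Fin 2 → ℝ)) (hSm : MeasurableSet S) (hSfin : volume S < ⊤)
    (u F : (Fin 2 → ℝ) × ℝ → EuclideanSpace ℂ (Fin 3))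
    (hu : StronglyMeasurable u)
    (huL2 : IntegrableOn (fun x => ‖u x‖ ^ 2) (S ×ˢ Set.Ioo (-L) L))
    (hF : StronglyMeasurable F)
    (hFbd : ∀ x, ‖F x‖ ≤ M)
    (K : Set ℤ) (hK : K = {k : ℤ | -L < (k : ℝ) * d ∧ (k : ℝ) * d < L - d})
    (α : ℝ → ℂ)
    (hα : ∀ t, α t = ∑' k : K,
      d * ∫ x' in S,
        bilinDot (u (x', (((k : ℤ) : ℝ) + t) * d)) (F (x', (((k : ℤ) : ℝ) + t) * d))) :
    (∀ᵐ t ∂(volume.restrict (Set.Ioo (0 : ℝ) 1)), ∀ k ∈ K,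
      IntegrableOn
        (fun x' => bilinDot (u (x', ((k : ℝ) + t) * d)) (F (x', ((k : ℝ) + t) * d))) S) ∧
    (∫ t in Set.Ioo (0 : ℝ) 1, ‖α t‖ ^ 2) ≤
      2 * L * (volume S).toReal * M ^ 2 *
        ∫ x in S ×ˢ Set.Ioo (-L) L, ‖u x‖ ^ 2 :=
  slice_functional_L2_bound_general L d M hL hd S hSfin u F hu huL2 hF hFbd K hK α hα
end

section
/- Let g : ℝ³ → ℝ³ be twice continuously differentiable and let E : ℝ³ → ℂ³ be continuously differentiable. Define Ẽ : ℝ³ → ℂ³ componentwise by Ẽ_i(x) = ∑_{j=1}^{3} E_j(g(x)) · ∂_i g_j(x) for i = 1,2,3. Then for every x ∈ ℝ³, (curl Ẽ)(x) = (1/2) ∑_{j ≠ l} ( ∇g_l(x) ×ℝ ∇g_j(x) ) · ( ∂_l E_j − ∂_j E_l )(g(x)), where the sum is over ordered pairs (j,l) with j, l ∈ {1,2,3} and j ≠ l, ∇g_m(x) ∈ ℝ³ is the gradient of the m-th component of g, ×ℝ is the cross product on ℝ³, and the real vector ∇g_l(x) ×ℝ ∇g_j(x) is multiplied by the complex scalar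 (∂_l E_j − ∂_j E_l)(g(x)). -/
/-
`Ẽ` is the pullback `g^*E` of `E` read as a one-form, and the curl is the exterior derivative
on one-forms, so the claim is `d (g^*E) = g^*(dE)`. In coordinates: by the product and chain
rules, `∂_a Ẽ_b` is `∑ j, E_j(g) ∂_a ∂_b g_j` plus first-order terms; the former is symmetric
in `a, b` and cancels in `∂_a Ẽ_b - ∂_b Ẽ_a`, which leaves
`∑ j l, (∂_a g_l ∂_b g_j - ∂_b g_l ∂_a g_j) ∂_l E_j (g x)`. For the cyclic pairs `(a, b)` the
coefficient is a component of `∇g_l × ∇g_j`, antisymmetric in `(j, l)`, and symmetrizing the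
sum gives the factor `1/2`.
-/

/-- Partial derivative `∂_i f` of a `ℂ`-valued function on `ℝ³`. -/
noncomputable def pdC (i : Fin 3) (f : (Fin 3 → ℝ) → ℂ) (x : Fin 3 → ℝ) : ℂ :=
  fderiv ℝ f x (Pi.single i 1)

/-- Partial derivative `∂_i f` of an `ℝ`-valued function on `ℝ³`. -/
noncomputable def pdR (i : Fin 3) (f : (Fin 3 → ℝ) → ℝ) (x : Fin 3 → ℝ) : ℝ :=
  fderiv ℝ f x (Pi.single i 1)

/-- The curl of a `ℂ³`-valued vector field on `ℝ³`:
`curl u = (∂₂u₃ − ∂₃u₂, ∂₃u₁ − ∂₁u₃, ∂₁u₂ − ∂₂u₁)`. -/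
noncomputable def curl3 (u : (Fin 3 → ℝ) → Fin 3 → ℂ) (x : Fin 3 → ℝ) : Fin 3 → ℂ :=
  ![pdC 1 (fun y => u y 2) x - pdC 2 (fun y => u y 1) x,
    pdC 2 (fun y => u y 0) x - pdC 0 (fun y => u y 2) x,
    pdC 0 (fun y => u y 1) x - pdC 1 (fun y => u y 0) x]

/-- The gradient of an `ℝ`-valued function on `ℝ³`. -/
noncomputable def grad3 (f : (Fin 3 → ℝ) → ℝ) (x : Fin 3 → ℝ) : Fin 3 → ℝ :=
  fun i => pdR i f x

section
variable {V ι : Type*} [NormedAddCommGroup V] [NormedSpace ℝ V] [Fintype ι]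

/-- `E` read as a `ℂ`-valued one-form, pulled back along `g` and evaluated at `y` on `v`;
the field `Ẽ` of the paper is `Ẽ y i = pullback g E y (Pi.single i 1)`. -/
noncomputable def pullback (g : V → ι → ℝ) (E : (ι → ℝ) → ι → ℂ) (y v : V) : ℂ :=
  ∑ j, E (g y) j * (fderiv ℝ g y v j : ℂ)

variable {g : V → ι → ℝ} {E : (ι → ℝ) → ι → ℂ} {x : V}

theorem fderiv_pullback_apply (hg : ContDiffAt ℝ 2 g x) (hE : DifferentiableAt ℝ E (g x))
    (v w : V) :
    fderiv ℝ (pullback g E · v) x w =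
      ∑ j, (E (g x) j * (fderiv ℝ (fderiv ℝ g) x w v j : ℂ)
        + (fderiv ℝ g x v j : ℂ) * fderiv ℝ E (g x) (fderiv ℝ g x w) j) := by
  have hEg : HasFDerivAt (fun y => E (g y)) ((fderiv ℝ E (g x)).comp (fderiv ℝ g x)) x :=
    hE.hasFDerivAt.comp x (hg.differentiableAt two_ne_zero).hasFDerivAt
  have hDgv : HasFDerivAt (fun y => fderiv ℝ g y v) ((fderiv ℝ (fderiv ℝ g) x).flip v) x := by
    simpa using ((hg.fderiv_right (m := 1) le_rfl).differentiableAt one_ne_zero).hasFDerivAt.clm_apply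
      (hasFDerivAt_const v x)
  have hterm : ∀ j, HasFDerivAt (fun y => E (g y) j * (fderiv ℝ g y v j : ℂ)) _ x := fun j =>
    (hasFDerivAt_pi'.1 hEg j).mul (Complex.ofRealCLM.hasFDerivAt.comp x (hasFDerivAt_pi'.1 hDgv j))
  unfold pullback
  rw [(HasFDerivAt.fun_sum fun j _ => hterm j).fderiv]
  simp

/-- The second-derivative terms cancel by the symmetry of `D²g`. -/
theorem fderiv_pullback_apply_sub_swap (hg : ContDiffAt ℝ 2 g x)
    (hE : DifferentiableAt ℝ E (g x)) (v w : V) :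
    fderiv ℝ (pullback g E · v) x w - fderiv ℝ (pullback g E · w) x v =
      ∑ j, ((fderiv ℝ g x v j : ℂ) * fderiv ℝ E (g x) (fderiv ℝ g x w) j
        - (fderiv ℝ g x w j : ℂ) * fderiv ℝ E (g x) (fderiv ℝ g x v) j) := by
  rw [fderiv_pullback_apply hg hE, fderiv_pullback_apply hg hE,
    (hg.isSymmSndFDerivAt (by simp)).eq w v, ← Finset.sum_sub_distrib]
  congr! 1 with j
  ring

end

theorem sum_sum_mul_eq_half_sum_sum_sub {ι K : Type*} [Fintype ι] [DecidableEq ι] [Field K]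
    [CharZero K] (c d : ι → ι → K) (hc : ∀ j l, c j l = -c l j) :
    ∑ j, ∑ l, c l j * d l j =
      (1 / 2 : K) * ∑ j, ∑ l, if j = l then 0 else c l j * (d l j - d j l) := by
  have hdiag : ∀ j l, (if j = l then 0 else c l j * (d l j - d j l)) = c l j * (d l j - d j l) := by
    intro j l
    split_ifs with h <;> simp [h]
  have hswap : ∑ j, ∑ l, c l j * d j l = -∑ j, ∑ l, c l j * d l j := by
    rw [Finset.sum_comm, ← Finset.sum_neg_distrib]
    refine Finset.sum_congr rfl fun j _ => ?_
    rw [← Finset.sum_neg_distrib]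
    refine Finset.sum_congr rfl fun l _ => ?_
    rw [hc, neg_mul]
  simp only [hdiag]
  simp only [mul_sub, Finset.sum_sub_distrib, hswap]
  ring

theorem cross_apply_cyclic (u w : Fin 3 → ℝ) (i : Fin 3) :
    crossProduct u w i = u (i + 1) * w (i + 2) - u (i + 2) * w (i + 1) := by
  fin_cases i <;> simp [cross_apply]

theorem curl3_apply_cyclic (u : (Fin 3 → ℝ) → Fin 3 → ℂ) (x : Fin 3 → ℝ) (i : Fin 3) :
    curl3 u x i = pdC (i + 1) (u · (i + 2)) x - pdC (i + 2) (u · (i + 1)) x := by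
  fin_cases i <;> rfl

theorem pdR_eq_fderiv_apply {g : (Fin 3 → ℝ) → Fin 3 → ℝ} {y : Fin 3 → ℝ}
    (hg : DifferentiableAt ℝ g y) (i j : Fin 3) :
    pdR i (g · j) y = fderiv ℝ g y (Pi.single i 1) j := by
  rw [pdR, fderiv_apply hg j]
  rfl

theorem fderiv_apply_eq_sum_pdC {E : (Fin 3 → ℝ) → Fin 3 → ℂ} {z : Fin 3 → ℝ}
    (hE : DifferentiableAt ℝ E z) (u : Fin 3 → ℝ) (j : Fin 3) :
    fderiv ℝ E z u j = ∑ l, (u l : ℂ) * pdC l (E · j) z := by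
  conv_lhs => rw [pi_eq_sum_univ' u]
  simp [pdC, fderiv_apply hE j, Complex.real_smul]

theorem pdC_sub_pdC_pullback {g : (Fin 3 → ℝ) → Fin 3 → ℝ} {E : (Fin 3 → ℝ) → Fin 3 → ℂ}
    (hg : ContDiff ℝ 2 g) (hE : ContDiff ℝ 1 E) (a b : Fin 3) (x : Fin 3 → ℝ) :
    pdC a (pullback g E · (Pi.single b 1)) x - pdC b (pullback g E · (Pi.single a 1)) x =
      ∑ j, ∑ l, ((pdR a (g · l) x * pdR b (g · j) x - pdR b (g · l) x * pdR a (g · j) x : ℝ) : ℂ)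
        * pdC l (E · j) (g x) := by
  have hgx : DifferentiableAt ℝ g x := hg.differentiable two_ne_zero x
  have hEgx : DifferentiableAt ℝ E (g x) := hE.differentiable one_ne_zero (g x)
  rw [pdC, pdC, fderiv_pullback_apply_sub_swap hg.contDiffAt hEgx]
  simp only [fderiv_apply_eq_sum_pdC hEgx, pdR_eq_fderiv_apply hgx, Finset.mul_sum,
    ← Finset.sum_sub_distrib]
  push_cast
  congr! 2
  ring

/-- Pullback identity for the curl (Appendix B, property 4, of the paper).
For `g : ℝ³ → ℝ³` of class `C²`, `E : ℝ³ → ℂ³` of class `C¹` and the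
transformed field `Ẽ_i(x) = ∑ j, E_j(g(x)) ∂_i g_j(x)`, one has
`curl Ẽ (x) = ½ ∑_{j ≠ l} (∇g_l(x) × ∇g_j(x)) · (∂_l E_j − ∂_j E_l)(g(x))`,
where the real vector `∇g_l × ∇g_j` multiplies the complex scalar
coordinatewise. -/
theorem curl_pullback
    (g : (Fin 3 → ℝ) → Fin 3 → ℝ) (hg : ContDiff ℝ 2 g)
    (E : (Fin 3 → ℝ) → Fin 3 → ℂ) (hE : ContDiff ℝ 1 E)
    (Et : (Fin 3 → ℝ) → Fin 3 → ℂ)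
    (hEt : ∀ (x : Fin 3 → ℝ) (i : Fin 3),
      Et x i = ∑ j, E (g x) j * ((pdR i (fun y => g y j) x : ℝ) : ℂ)) :
    ∀ x : Fin 3 → ℝ,
      curl3 Et x =
        (1 / 2 : ℂ) • ∑ j : Fin 3, ∑ l : Fin 3,
          if j = l then 0 else
            fun i : Fin 3 =>
              (((crossProduct (grad3 (fun y => g y l) x) (grad3 (fun y => g y j) x)) i : ℝ) : ℂ) *
                (pdC l (fun y => E y j) (g x) - pdC j (fun y => E y l) (g x)) := by
  have hEt_pullback : Et = fun y i => pullback g E y (Pi.single i 1) := by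
    funext y i
    simp only [hEt, pullback, pdR_eq_fderiv_apply (hg.differentiable two_ne_zero y)]
  subst hEt_pullback
  intro x
  funext i
  rw [curl3_apply_cyclic, pdC_sub_pdC_pullback hg hE]
  simp only [Pi.smul_apply, Finset.sum_apply, apply_ite (fun f : Fin 3 → ℂ => f i), Pi.zero_apply,
    smul_eq_mul]
  rw [← sum_sum_mul_eq_half_sum_sum_sub]
  · simp only [cross_apply_cyclic, grad3]
  · intro j l
    rw [← cross_anticomm, Pi.neg_apply, Complex.ofReal_neg]
end
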